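/- Let M = [[A, B],[B^T, C]] be a symmetric positive semidefinite block matrix. Then rank M = rank C + rank (A - B C^† B^T). -/

import Mathlib

open Matrix

open scoped Classical

/-- Moore–Penrose pseudoinverse of a real matrix, defined via the four Penrose
conditions (which determine it uniquely when it exists). -/
noncomputable def pinv {n m : ℕ} (A : Matrix (Fin n) (Fin m) ℝ) : Matrix (Fin m) (Fin n) ℝ :=
  if h : ∃ X : Matrix (Fin m) (Fin n) ℝ,
      A * X * A = A ∧ X * A * X = X ∧ (A * X)ᵀ = A * X ∧ (X * A)ᵀ = X * A
  then h.choose else 0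

/-!
Testing the psd matrix `M` on vectors `(0, v)` shows `ker C ⊆ ker B`, hence `B C^† C = B`. This
gives the congruence `M = Q (diag (M/C, C)) Qᵀ` with `Q = [[1, B C^†], [0, 1]]` unimodular, and
the rank of a block-diagonal matrix is the sum of the ranks of its blocks.
-/

lemma Submodule.finrank_prod {K V W : Type*} [Field K] [AddCommGroup V] [Module K V]
    [AddCommGroup W] [Module K W] (p : Submodule K V) (q : Submodule K W) [FiniteDimensional K p]
    [FiniteDimensional K q] : Module.finrank K (p.prod q) = Module.finrank K p + Module.finrank K q := by
  calc Module.finrank K (p.prod q)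
      = Module.finrank K (p.subtype.prodMap q.subtype).range := by
        rw [LinearMap.range_prodMap, p.range_subtype, q.range_subtype]
    _ = Module.finrank K (p × q) :=
        LinearMap.finrank_range_of_inj (p.injective_subtype.prodMap q.injective_subtype)
    _ = Module.finrank K p + Module.finrank K q := Module.finrank_prod

namespace Matrix

def IsMoorePenroseInverse {R : Type*} [CommRing R] {m n : Type*} [Fintype m] [Fintype n]
    (A : Matrix m n R) (X : Matrix n m R) : Prop :=
  A * X * A = A ∧ X * A * X = X ∧ (A * X)ᵀ = A * X ∧ (X * A)ᵀ = X * A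

lemma IsHermitian.isMoorePenroseInverse_cfc_inv {m : Type*} [Fintype m] [DecidableEq m]
    {C : Matrix m m ℝ} (hC : C.IsHermitian) :
    IsMoorePenroseInverse C (cfc (·⁻¹ : ℝ → ℝ) C) := by
  -- The Penrose identities hold pointwise on the spectrum because `(0 : ℝ)⁻¹ = 0`.
  have hcont (f : ℝ → ℝ) : ContinuousOn f (spectrum ℝ C) := C.finite_spectrum.continuousOn f
  have hmul (f g : ℝ → ℝ) : cfc f C * cfc g C = cfc (fun x ↦ f x * g x) C :=
    (cfc_mul f g C (hcont f) (hcont g)).symm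
  have hsymm (f : ℝ → ℝ) : (cfc f C)ᵀ = cfc f C := by
    rw [← conjTranspose_eq_transpose_of_trivial]
    exact cfc_predicate f C
  have h : IsMoorePenroseInverse (cfc (fun x ↦ x : ℝ → ℝ) C) (cfc (·⁻¹ : ℝ → ℝ) C) := by
    refine ⟨?_, ?_, ?_, ?_⟩ <;> simp only [hmul, hsymm] <;> congr 1 <;> funext x
    · exact mul_inv_mul_cancel x
    · simpa using mul_inv_mul_cancel x⁻¹
  have hid : cfc (fun x ↦ x : ℝ → ℝ) C = C := cfc_id' ℝ C hC
  rwa [hid] at h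

open scoped ComplexOrder in
lemma PosSemidef.mulVec_eq_zero_of_fromBlocks {𝕜 : Type*} [RCLike 𝕜] {m n : Type*} [Fintype m]
    [Fintype n] {A : Matrix m m 𝕜} {B : Matrix m n 𝕜} {D : Matrix n m 𝕜} {C : Matrix n n 𝕜}
    (hM : (fromBlocks A B D C).PosSemidef) {v : n → 𝕜} (hv : C *ᵥ v = 0) : B *ᵥ v = 0 := by
  have hMv : fromBlocks A B D C *ᵥ Sum.elim 0 v = Sum.elim (B *ᵥ v) 0 := by
    simp [fromBlocks_mulVec, hv]
  have hquad : star (Sum.elim 0 v) ⬝ᵥ fromBlocks A B D C *ᵥ Sum.elim 0 v = 0 := by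
    simp [hMv, dotProduct, Fintype.sum_sum_type]
  have := (hM.dotProduct_mulVec_zero_iff _).mp hquad
  rw [hMv] at this
  exact funext fun i ↦ congrFun this (Sum.inl i)

lemma mul_eq_zero_of_mulVec_imp {R : Type*} [CommRing R] {l m n : Type*} [Fintype m]
    [Fintype n] [DecidableEq n] {B : Matrix l m R} {C : Matrix n m R}
    (h : ∀ v, C *ᵥ v = 0 → B *ᵥ v = 0) {N : Matrix m n R} (hN : C * N = 0) : B * N = 0 := by
  refine ext_of_mulVec_single fun j ↦ ?_
  rw [zero_mulVec, ← mulVec_mulVec]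
  exact h _ (by rw [mulVec_mulVec, hN, zero_mulVec])

lemma mul_mul_eq_of_mulVec_imp {R : Type*} [CommRing R] {l m : Type*} [Fintype m]
    [DecidableEq m] {B : Matrix l m R} {C P : Matrix m m R}
    (h : ∀ v, C *ᵥ v = 0 → B *ᵥ v = 0) (hC : C * P * C = C) : B * P * C = B := by
  have : B * (P * C - 1) = 0 :=
    mul_eq_zero_of_mulVec_imp h <| by
      rw [Matrix.mul_sub, ← Matrix.mul_assoc, hC, Matrix.mul_one, sub_self]
  rwa [Matrix.mul_sub, Matrix.mul_one, sub_eq_zero, ← Matrix.mul_assoc] at this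

lemma fromBlocks_eq_mul_fromBlocks_mul_transpose {R : Type*} [CommRing R] {m n : Type*}
    [Fintype m] [Fintype n] [DecidableEq m] [DecidableEq n] (A : Matrix m m R)
    {B : Matrix m n R} {C P : Matrix n n R} (hC : Cᵀ = C) (hB : B * P * C = B) :
    fromBlocks A B Bᵀ C = fromBlocks 1 (B * P) 0 1 * fromBlocks (A - B * P * Bᵀ) 0 0 C *
      (fromBlocks 1 (B * P) 0 1)ᵀ := by
  have hB' : C * Pᵀ * Bᵀ = Bᵀ := by
    simpa [Matrix.mul_assoc, hC] using congrArg transpose hB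
  simp only [fromBlocks_transpose, fromBlocks_multiply, transpose_mul]
  simp only [Matrix.one_mul, Matrix.mul_one, Matrix.zero_mul, Matrix.mul_zero, add_zero, zero_add,
    transpose_one, transpose_zero, fromBlocks_inj, and_true]
  refine ⟨?_, hB.symm, by rw [← Matrix.mul_assoc, hB']⟩
  rw [Matrix.mul_assoc (B * P) C, ← Matrix.mul_assoc C, hB', sub_add_cancel]

lemma rank_fromBlocks_zero_zero {K : Type*} [Field K] {m n p q : Type*} [Fintype m] [Fintype n]
    [Fintype p] [Fintype q] (S : Matrix m n K) (C : Matrix p q K) :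
    (fromBlocks S 0 0 C).rank = S.rank + C.rank := by
  let e₁ := LinearEquiv.sumArrowLequivProdArrow n q K K
  let e₂ := LinearEquiv.sumArrowLequivProdArrow m p K K
  have h : (fromBlocks S 0 0 C).mulVecLin =
      e₂.symm.toLinearMap ∘ₗ S.mulVecLin.prodMap C.mulVecLin ∘ₗ e₁.toLinearMap := by
    refine LinearMap.ext fun v ↦ funext fun i ↦ ?_
    rcases i with i | i <;>
      simp only [mulVecBilin_apply, fromBlocks_mulVec, zero_mulVec, add_zero, zero_add, Sum.elim_inl,
        Sum.elim_inr, LinearMap.coe_comp, LinearEquiv.coe_coe, Function.comp_apply,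
        LinearMap.prodMap_apply, LinearEquiv.sumArrowLequivProdArrow_symm_apply_inl,
        LinearEquiv.sumArrowLequivProdArrow_symm_apply_inr, e₂, e₁] <;> rfl
  rw [rank, h, LinearMap.range_comp, LinearMap.range_comp_of_range_eq_top _ e₁.range,
    LinearEquiv.finrank_map_eq, LinearMap.range_prodMap, Submodule.finrank_prod]
  rfl

end Matrix

lemma isMoorePenroseInverse_pinv {n m : ℕ} {A : Matrix (Fin n) (Fin m) ℝ}
    (h : ∃ X, IsMoorePenroseInverse A X) : IsMoorePenroseInverse A (pinv A) := by
  unfold pinv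
  split_ifs with h'
  exacts [h'.choose_spec, absurd h h']

theorem stmt3_general {n m : ℕ} (A : Matrix (Fin n) (Fin n) ℝ) (B : Matrix (Fin n) (Fin m) ℝ)
    (C : Matrix (Fin m) (Fin m) ℝ) (hC : Cᵀ = C)
    (hM : (Matrix.fromBlocks A B Bᵀ C).PosSemidef) :
    (Matrix.fromBlocks A B Bᵀ C).rank = C.rank + (A - B * pinv C * Bᵀ).rank := by
  have hC' : C.IsHermitian := by rwa [IsHermitian, conjTranspose_eq_transpose_of_trivial]
  obtain ⟨hCPC, -⟩ := isMoorePenroseInverse_pinv ⟨_, hC'.isMoorePenroseInverse_cfc_inv⟩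
  have hBPC : B * pinv C * C = B :=
    mul_mul_eq_of_mulVec_imp (fun _ ↦ hM.mulVec_eq_zero_of_fromBlocks) hCPC
  have hQ : IsUnit (fromBlocks 1 (B * pinv C) 0 (1 : Matrix (Fin m) (Fin m) ℝ)).det := by
    simp
  rw [fromBlocks_eq_mul_fromBlocks_mul_transpose A hC hBPC,
    rank_mul_eq_left_of_isUnit_det _ _ (by rwa [det_transpose]),
    rank_mul_eq_right_of_isUnit_det _ _ hQ, rank_fromBlocks_zero_zero, add_comm]

/-- For a psd block matrix M = [[A,B],[Bᵀ,C]], rank M = rank C + rank (M/C). -/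
theorem stmt3 {n m : ℕ} (A : Matrix (Fin n) (Fin n) ℝ) (B : Matrix (Fin n) (Fin m) ℝ)
    (C : Matrix (Fin m) (Fin m) ℝ) (hA : Aᵀ = A) (hC : Cᵀ = C)
    (hM : (Matrix.fromBlocks A B Bᵀ C).PosSemidef) :
    (Matrix.fromBlocks A B Bᵀ C).rank = C.rank + (A - B * pinv C * Bᵀ).rank :=
  stmt3_general A B C hC hM
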